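/- arXiv:1604.01391 — 2 statements merged into one kernel-verified Lean document; each statement's English description precedes it below -/
import Mathlib

section
/- The bilinear bracket on the polynomial ring C[x11, x12, x21, x22] determined on generators by {x11,x12} = x11·x12, {x11,x21} = x11·x21, {x11,x22} = 2·x12·x21, {x12,x21} = 0, {x12,x22} = x12·x22, {x21,x22} = x21·x22, and extended by the Leibniz rule in each argument, satisfies the Jacobi identity, so it makes C[x11,x12,x21,x22] a Poisson algebra. -/
/- The semiclassical limit Poisson bracket on O(M_2) = C[x11,x12,x21,x22],
realized on the polynomial ring `MvPolynomial (Fin 4) ℂ` with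
x11 = X 0, x12 = X 1, x21 = X 2, x22 = X 3.  The Leibniz-rule extension of a
bracket given on generators by an antisymmetric bivector `P2 i j = {x_i, x_j}`
is the bidifferential operator `pb2 f g = ∑ i j, P2 i j * ∂f/∂x_i * ∂g/∂x_j`. -/

open MvPolynomial

noncomputable section

abbrev A2 : Type := MvPolynomial (Fin 4) ℂ

def P2 : Fin 4 → Fin 4 → A2 :=
  ![![0, X 0 * X 1, X 0 * X 2, 2 * X 1 * X 2],
    ![-(X 0 * X 1), 0, 0, X 1 * X 3],
    ![-(X 0 * X 2), 0, 0, X 2 * X 3],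
    ![-(2 * X 1 * X 2), -(X 1 * X 3), -(X 2 * X 3), 0]]

/-- The Leibniz-rule extension of the bracket given on generators. -/
def pb2 (f g : A2) : A2 :=
  ∑ i : Fin 4, ∑ j : Fin 4, P2 i j * pderiv i f * pderiv j g

/-! For an antisymmetric bivector `P`, the Jacobiator `J(f, g, h)` equals
`(⁅H f, H g⁆ - H {f, g}) h`, where `H f = {f, ·}` is the Hamiltonian derivation; so it is a
derivation in `h`, and by cyclic symmetry in each argument. A derivation of a polynomial ring
is determined by its values on the variables, so the Jacobi identity reduces to the triples of
generators, where it is a finite polynomial computation. -/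

namespace MvPolynomial

variable {σ R : Type*} [Fintype σ] [CommRing R] (P : σ → σ → MvPolynomial σ R)

def bivectorBracket (f g : MvPolynomial σ R) : MvPolynomial σ R :=
  ∑ i, ∑ j, P i j * pderiv i f * pderiv j g

def hamiltonianDerivation (f : MvPolynomial σ R) :
    Derivation R (MvPolynomial σ R) (MvPolynomial σ R) :=
  ∑ i, ∑ j, (P i j * pderiv i f) • pderiv j

theorem hamiltonianDerivation_apply (f g : MvPolynomial σ R) :
    hamiltonianDerivation P f g = bivectorBracket P f g := by
  simp only [hamiltonianDerivation, bivectorBracket, ← Derivation.coeFnAddMonoidHom_apply,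
    map_sum, Finset.sum_apply]
  simp [Derivation.coeFnAddMonoidHom_apply, smul_eq_mul]

theorem bivectorBracket_add_right (f g h : MvPolynomial σ R) :
    bivectorBracket P f (g + h) = bivectorBracket P f g + bivectorBracket P f h := by
  simp only [← hamiltonianDerivation_apply, map_add]

theorem bivectorBracket_smul_right (z : R) (f g : MvPolynomial σ R) :
    bivectorBracket P f (z • g) = z • bivectorBracket P f g := by
  simp only [← hamiltonianDerivation_apply]
  exact (hamiltonianDerivation P f).map_smul z g

theorem bivectorBracket_mul_right (f g h : MvPolynomial σ R) :
    bivectorBracket P f (g * h) = bivectorBracket P f g * h + g * bivectorBracket P f h := by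
  simp only [← hamiltonianDerivation_apply, Derivation.leibniz, smul_eq_mul]
  ring

theorem bivectorBracket_X_X (a b : σ) : bivectorBracket P (X a) (X b) = P a b := by
  classical
  simp [bivectorBracket, pderiv_X, Pi.single_apply]

theorem bivectorBracket_swap (hP : ∀ i j, P j i = -P i j) (f g : MvPolynomial σ R) :
    bivectorBracket P g f = -bivectorBracket P f g := by
  rw [bivectorBracket, Finset.sum_comm, bivectorBracket, ← Finset.sum_neg_distrib]
  refine Finset.sum_congr rfl fun i _ => ?_
  rw [← Finset.sum_neg_distrib]
  refine Finset.sum_congr rfl fun j _ => ?_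
  rw [hP]
  ring

def jacobiator (f g h : MvPolynomial σ R) : MvPolynomial σ R :=
  bivectorBracket P f (bivectorBracket P g h) + bivectorBracket P g (bivectorBracket P h f) +
    bivectorBracket P h (bivectorBracket P f g)

theorem jacobiator_rotate (f g h : MvPolynomial σ R) :
    jacobiator P f g h = jacobiator P g h f := by
  simp only [jacobiator]
  ring

theorem jacobiator_eq_lie_sub (hP : ∀ i j, P j i = -P i j) (f g h : MvPolynomial σ R) :
    jacobiator P f g h = (⁅hamiltonianDerivation P f, hamiltonianDerivation P g⁆ -
      hamiltonianDerivation P (bivectorBracket P f g)) h := by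
  rw [Derivation.sub_apply, Derivation.commutator_apply]
  simp only [hamiltonianDerivation_apply, jacobiator]
  rw [bivectorBracket_swap P hP f h, ← hamiltonianDerivation_apply P g (-_), map_neg,
    hamiltonianDerivation_apply, bivectorBracket_swap P hP (bivectorBracket P f g) h]
  ring

theorem jacobiator_eq_zero_of_X_right (hP : ∀ i j, P j i = -P i j) {f g : MvPolynomial σ R}
    (hX : ∀ c, jacobiator P f g (X c) = 0) (h : MvPolynomial σ R) : jacobiator P f g h = 0 := by
  have hD : ⁅hamiltonianDerivation P f, hamiltonianDerivation P g⁆ -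
      hamiltonianDerivation P (bivectorBracket P f g) = 0 :=
    derivation_ext fun c => by rw [← jacobiator_eq_lie_sub P hP, hX, Derivation.zero_apply]
  rw [jacobiator_eq_lie_sub P hP, hD, Derivation.zero_apply]

theorem jacobiator_eq_zero_of_X (hP : ∀ i j, P j i = -P i j)
    (hX : ∀ a b c, jacobiator P (X a) (X b) (X c) = 0) (f g h : MvPolynomial σ R) :
    jacobiator P f g h = 0 := by
  refine jacobiator_eq_zero_of_X_right P hP (fun c => ?_) h
  rw [jacobiator_rotate]
  refine jacobiator_eq_zero_of_X_right P hP (fun a => ?_) f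
  rw [jacobiator_rotate]
  exact jacobiator_eq_zero_of_X_right P hP (fun b => hX c a b) g

theorem jacobiator_X_X_X (a b c : σ) :
    jacobiator P (X a) (X b) (X c) = ∑ j, (P a j * pderiv j (P b c) +
      P b j * pderiv j (P c a) + P c j * pderiv j (P a b)) := by
  classical
  simp [jacobiator, bivectorBracket, pderiv_X, Pi.single_apply, Finset.sum_add_distrib]

end MvPolynomial

theorem P2_antisymm (i j : Fin 4) : P2 j i = -P2 i j := by
  fin_cases i <;> fin_cases j <;> simp [P2]

theorem jacobiator_P2_X_X_X (a b c : Fin 4) : jacobiator P2 (X a) (X b) (X c) = 0 := by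
  have pderiv_two (i : Fin 4) : pderiv i (2 : A2) = 0 := by
    exact_mod_cast (pderiv i).map_natCast 2
  rw [jacobiator_X_X_X]
  fin_cases a <;> fin_cases b <;> fin_cases c <;>
    simp [P2, Fin.sum_univ_four, pderiv_two] <;> ring

/-- the bracket on `C[x11,x12,x21,x22]` determined on generators by
`{x11,x12} = x11 x12`, `{x11,x21} = x11 x21`, `{x11,x22} = 2 x12 x21`,
`{x12,x21} = 0`, `{x12,x22} = x12 x22`, `{x21,x22} = x21 x22`, extended by
bilinearity and the Leibniz rule in each argument, is antisymmetric and
satisfies the Jacobi identity, hence makes the polynomial ring a Poisson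
algebra. -/
theorem stmt0 :
    (pb2 (X 0) (X 1) = X 0 * X 1) ∧
    (pb2 (X 0) (X 2) = X 0 * X 2) ∧
    (pb2 (X 0) (X 3) = 2 * X 1 * X 2) ∧
    (pb2 (X 1) (X 2) = 0) ∧
    (pb2 (X 1) (X 3) = X 1 * X 3) ∧
    (pb2 (X 2) (X 3) = X 2 * X 3) ∧
    (∀ f g : A2, pb2 f g = - pb2 g f) ∧
    (∀ f g h : A2, pb2 f (g + h) = pb2 f g + pb2 f h) ∧
    (∀ (z : ℂ) (f g : A2), pb2 f (z • g) = z • pb2 f g) ∧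
    (∀ f g h : A2, pb2 f (g * h) = pb2 f g * h + g * pb2 f h) ∧
    (∀ f g h : A2, pb2 f (pb2 g h) + pb2 g (pb2 h f) + pb2 h (pb2 f g) = 0) := by
  refine ⟨?_, ?_, ?_, ?_, ?_, ?_, fun f g => bivectorBracket_swap P2 P2_antisymm g f,
    bivectorBracket_add_right P2, bivectorBracket_smul_right P2, bivectorBracket_mul_right P2,
    jacobiator_eq_zero_of_X P2 P2_antisymm jacobiator_P2_X_X_X⟩ <;>
  exact (bivectorBracket_X_X P2 _ _).trans (by simp [P2])
end
end

section
/- In the Poisson algebra O(SL_2) = C[a,b,c,d]/(ad−bc−1) with the bracket induced from {a,b}=ab, {a,c}=ac, {a,d}=2bc, {b,c}=0, {b,d}=bd, {c,d}=cd, the Poisson centralizer of the trace tr = a + d equals the polynomial subalgebra C[tr]: an element g satisfies {a+d, g} = 0 if and only if g ∈ C[a+d]. -/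
/- The semiclassical limit Poisson bracket on O(M_2) = C[a,b,c,d],
realized on `MvPolynomial (Fin 4) ℂ` with a = X 0, b = X 1, c = X 2, d = X 3.
The Leibniz-rule extension of the bracket given on generators by the
antisymmetric bivector `P2 i j = {x_i, x_j}` is the bidifferential operator
`pb2 f g = ∑ i j, P2 i j * ∂f/∂x_i * ∂g/∂x_j`. -/

open MvPolynomial

noncomputable section

/-! The bracket `{a + d, ·}` is a derivation `D` that preserves the `ℤ`-grading with `b` of
degree `1` and `c` of degree `-1`; the relation `q = ad - bc - 1` has degree `0` and `D q = 0`.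
So it suffices to treat homogeneous `g` of degree `n`, and the symmetry `b ↔ c` reduces to
`n ≥ 0`. Such a `g` is `bⁿ h(a, bc, d)`, so modulo `q` it is determined by its restriction `G`
to the chart `b = 1` of `SL₂`, with coordinates `r = a` and `s = a + d`. There `q ∣ D g` becomes
`n (2r - s) G + 2 (r² - sr + 1) ∂ᵣG = 0`, and comparing the top coefficients in `r` gives
`deg_r G = -n`. Hence `G = 0`, or `n = 0` and `G` depends on `s` only, i.e. `g ≡ p(a + d)`. -/

namespace MvPolynomial

variable {σ R : Type*}

theorem IsWeightedHomogeneous.sum_weight_X_mul_pderiv_int [CommRing R] [Fintype σ]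
    {w : σ → ℤ} {n : ℤ} {φ : MvPolynomial σ R} (h : φ.IsWeightedHomogeneous w n) :
    ∑ i, w i • (X i * pderiv i φ) = n • φ := by
  induction h using IsWeightedHomogeneous.induction_on with
  | zero => simp
  | add p q _ _ hp hq => simp only [map_add, mul_add, smul_add, Finset.sum_add_distrib, hp, hq]
  | monomial d r hd =>
    rw [← hd, Finsupp.weight_apply, Finsupp.sum_fintype _ _ (by simp), Finset.sum_smul]
    simp_rw [X_mul_pderiv_monomial, smul_assoc, smul_comm (w _)]

theorem weightedHomogeneousComponent_comm_of_isWeightedHomogeneous {M : Type*} [CommSemiring R]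
    [AddCommMonoid M] {w : σ → M} (f : MvPolynomial σ R →ₗ[R] MvPolynomial σ R)
    (hf : ∀ m φ, IsWeightedHomogeneous w φ m → IsWeightedHomogeneous w (f φ) m)
    (m : M) (φ : MvPolynomial σ R) :
    weightedHomogeneousComponent w m (f φ) = f (weightedHomogeneousComponent w m φ) := by
  induction φ using MvPolynomial.induction_on' with
  | monomial d r =>
    have hd := isWeightedHomogeneous_monomial w d r rfl
    by_cases h : Finsupp.weight w d = m
    · rw [← h, (hf _ _ hd).weightedHomogeneousComponent_same,
        hd.weightedHomogeneousComponent_same]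
    · rw [(hf _ _ hd).weightedHomogeneousComponent_ne _ (Ne.symm h),
        hd.weightedHomogeneousComponent_ne _ (Ne.symm h), map_zero]
  | add p q hp hq => simp only [map_add, hp, hq]

end MvPolynomial

namespace Polynomial

theorem coeff_X_mul_derivative {S : Type*} [CommSemiring S] (p : S[X]) (n : ℕ) :
    (X * derivative p).coeff n = n * p.coeff n := by
  cases n with
  | zero => simp
  | succ n => rw [coeff_X_mul, coeff_derivative, mul_comm]; push_cast; rfl

theorem natDegree_eq_neg_of_derivative_eq {S : Type*} [CommRing S] [IsDomain S] [CharZero S]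
    {u : S} {n : ℤ} {G : S[X]} (hG : G ≠ 0)
    (h : n • ((2 * X - C u) * G) + 2 * (X ^ 2 - C u * X + 1) * derivative G = 0) :
    (G.natDegree : ℤ) = -n := by
  set N := G.natDegree
  have hcoeff := congrArg (coeff · (N + 1)) h
  have hexp : n • ((2 * X - C u) * G) + 2 * (X ^ 2 - C u * X + 1) * derivative G
      = n • (2 * (X * G) - C u * G) + 2 * (X * (X * derivative G))
        - 2 * (C u * (X * derivative G)) + 2 * derivative G := by ring
  have hN1 : G.coeff (N + 1) = 0 := coeff_eq_zero_of_natDegree_lt (by omega)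
  have hN2 : G.coeff (N + 1 + 1) = 0 := coeff_eq_zero_of_natDegree_lt (by omega)
  -- the coefficient of `X ^ (N + 1)` is `2 (n + N)` times the leading coefficient
  simp only [hexp, coeff_add, coeff_sub, coeff_smul, coeff_ofNat_mul, coeff_C_mul, coeff_X_mul,
    coeff_X_mul_derivative, coeff_derivative, hN1, hN2, coeff_zero] at hcoeff
  have hlead : (2 * ((n : S) + N)) * G.leadingCoeff = 0 := by
    rw [leadingCoeff]; linear_combination hcoeff
  have hsum : ((n + N : ℤ) : S) = 0 := by
    push_cast
    simpa [leadingCoeff_ne_zero.mpr hG, two_ne_zero] using hlead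
  have := Int.cast_eq_zero.mp hsum
  omega

end Polynomial

namespace SL2Trace

def weight : Fin 4 → ℤ := ![0, 1, -1, 0]

def detRel : A2 := X 0 * X 3 - X 1 * X 2 - 1

def trace : A2 := X 0 + X 3

def traceDerCoeff : Fin 4 → A2 :=
  ![-2 * X 1 * X 2, X 1 * (X 0 - X 3), X 2 * (X 0 - X 3), 2 * X 1 * X 2]

def traceDer : Derivation ℂ A2 A2 := ∑ i, traceDerCoeff i • pderiv i

theorem weight_apply (d : Fin 4 →₀ ℕ) : Finsupp.weight weight d = (d 1 : ℤ) - d 2 := by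
  rw [Finsupp.weight_apply, Finsupp.sum_fintype _ _ (by simp)]
  simp [Fin.sum_univ_four, weight]
  ring

theorem traceDer_apply (g : A2) : traceDer g = ∑ i, traceDerCoeff i * pderiv i g := by
  rw [traceDer, ← Derivation.coeFnAddMonoidHom_apply, map_sum]
  simp [Finset.sum_apply]

theorem pb2_trace (g : A2) : pb2 trace g = traceDer g := by
  simp [pb2, trace, traceDer_apply, traceDerCoeff, P2, Fin.sum_univ_four, pderiv_X]
  ring

theorem traceDer_X (i : Fin 4) : traceDer (X i) = traceDerCoeff i := by
  simp [traceDer_apply, pderiv_X, Pi.single_apply]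

theorem traceDer_trace : traceDer trace = 0 := by
  simp [trace, traceDer_X, traceDerCoeff]

theorem traceDer_detRel : traceDer detRel = 0 := by
  simp [detRel, traceDer_X, traceDerCoeff]
  ring

theorem isWeightedHomogeneous_traceDerCoeff (i : Fin 4) :
    (traceDerCoeff i).IsWeightedHomogeneous weight (weight i) := by
  have hX (j : Fin 4) := isWeightedHomogeneous_X ℂ weight j
  fin_cases i
  · simpa [traceDerCoeff, weight, mul_assoc, map_ofNat C] using ((hX 1).mul (hX 2)).C_mul (-2)
  · simpa [traceDerCoeff, weight] using (hX 1).mul ((hX 0).sub (hX 3))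
  · simpa [traceDerCoeff, weight] using (hX 2).mul ((hX 0).sub (hX 3))
  · simpa [traceDerCoeff, weight, mul_assoc, map_ofNat C] using ((hX 1).mul (hX 2)).C_mul 2

theorem isWeightedHomogeneous_traceDer {g : A2} {m : ℤ} (hg : g.IsWeightedHomogeneous weight m) :
    (traceDer g).IsWeightedHomogeneous weight m := by
  rw [traceDer_apply]
  refine IsWeightedHomogeneous.sum _ _ _ fun i _ => ?_
  simpa using (isWeightedHomogeneous_traceDerCoeff i).mul (hg.pderiv (sub_add_cancel m (weight i)))

theorem isWeightedHomogeneous_detRel : detRel.IsWeightedHomogeneous weight 0 := by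
  have hX (j : Fin 4) := isWeightedHomogeneous_X ℂ weight j
  simpa [detRel, weight] using
    (((hX 0).mul (hX 3)).sub ((hX 1).mul (hX 2))).sub (isWeightedHomogeneous_one ℂ weight)

theorem weightedHomogeneousComponent_traceDer (m : ℤ) (g : A2) :
    weightedHomogeneousComponent weight m (traceDer g) =
      traceDer (weightedHomogeneousComponent weight m g) :=
  weightedHomogeneousComponent_comm_of_isWeightedHomogeneous traceDer.toLinearMap
    (fun _ _ => isWeightedHomogeneous_traceDer) m g

theorem weightedHomogeneousComponent_detRel_mul (m : ℤ) (h : A2) :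
    weightedHomogeneousComponent weight m (detRel * h) =
      detRel * weightedHomogeneousComponent weight m h :=
  weightedHomogeneousComponent_comm_of_isWeightedHomogeneous (LinearMap.mulLeft ℂ detRel)
    (fun _ _ h => by simpa using isWeightedHomogeneous_detRel.mul h) m h

local notation "𝕣" => (Polynomial.X : Polynomial (Polynomial ℂ))
local notation "𝕤" => (Polynomial.C Polynomial.X : Polynomial (Polynomial ℂ))

/-- Restriction to the chart `b = 1` of `SL₂`, in the coordinates `r = a` (the outer variable)
and `s = a + d` (the inner one). -/
def toChart : A2 →ₐ[ℂ] Polynomial (Polynomial ℂ) :=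
  aeval ![𝕣, 1, 𝕣 * (𝕤 - 𝕣) - 1, 𝕤 - 𝕣]

def ofChart : Polynomial (Polynomial ℂ) →+* A2 :=
  Polynomial.eval₂RingHom (Polynomial.aeval trace).toRingHom (X 0)

def euler : Derivation ℂ A2 A2 := (X 1 : A2) • pderiv 1 - (X 2 : A2) • pderiv 2

theorem euler_eq {g : A2} {m : ℤ} (hg : g.IsWeightedHomogeneous weight m) :
    euler g = m • g := by
  rw [← hg.sum_weight_X_mul_pderiv_int]
  simp [euler, Fin.sum_univ_four, weight, sub_eq_add_neg]

theorem toChart_detRel : toChart detRel = 0 := by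
  simp [toChart, detRel]

theorem toChart_traceDer (g : A2) :
    toChart (traceDer g) = (2 * 𝕣 - 𝕤) * toChart (euler g) +
      2 * (𝕣 ^ 2 - 𝕤 * 𝕣 + 1) * Polynomial.derivative (toChart g) := by
  induction g using MvPolynomial.induction_on with
  | C c => simp [toChart, euler]
  | add p q hp hq => simp only [map_add, hp, hq]; ring
  | mul_X p i hp =>
    have hX : toChart (traceDer (X i)) = (2 * 𝕣 - 𝕤) * toChart (euler (X i)) +
        2 * (𝕣 ^ 2 - 𝕤 * 𝕣 + 1) * Polynomial.derivative (toChart (X i)) := by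
      fin_cases i <;> simp [toChart, euler, traceDer_X, traceDerCoeff, pderiv_X] <;> ring
    simp only [Derivation.leibniz, smul_eq_mul, map_add, map_mul, Polynomial.derivative_mul]
    linear_combination toChart (X i) * hp + toChart p * hX

def dehomogenize : A2 →ₐ[ℂ] A2 := aeval ![X 0, 1, X 1 * X 2, X 3]

theorem X_one_pow_mul_dehomogenize {g : A2} {n : ℕ} (hg : g.IsWeightedHomogeneous weight n) :
    X 1 ^ n * dehomogenize g = g := by
  induction hg using IsWeightedHomogeneous.induction_on with
  | zero => simp
  | add p q _ _ hp hq => rw [map_add, mul_add, hp, hq]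
  | monomial d r hd =>
    rw [weight_apply] at hd
    have hk : d 1 = d 2 + n := by omega
    simp only [dehomogenize, monomial_eq, Finsupp.prod_pow, Fin.prod_univ_four]
    simp [hk, algebraMap_eq]
    ring

theorem mk_ofChart_toChart (g : A2) :
    Ideal.Quotient.mk (Ideal.span {detRel}) (ofChart (toChart g)) =
      Ideal.Quotient.mk (Ideal.span {detRel}) (dehomogenize g) := by
  suffices h : (Ideal.Quotient.mk _).comp (ofChart.comp toChart.toRingHom) =
      (Ideal.Quotient.mk (Ideal.span {detRel})).comp dehomogenize.toRingHom from
    DFunLike.congr_fun h g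
  have hdet : Ideal.Quotient.mk (Ideal.span {detRel}) (X 0 * X 3 - X 1 * X 2 - 1) = 0 :=
    Ideal.Quotient.eq_zero_iff_mem.mpr (Ideal.subset_span rfl)
  refine MvPolynomial.ringHom_ext (fun c => ?_) (fun i => ?_)
  · simp [toChart, ofChart, dehomogenize]
  · fin_cases i <;> simp [toChart, ofChart, dehomogenize, trace]
    simp only [map_sub, map_mul, map_one] at hdet
    linear_combination hdet

theorem exists_dvd_sub_aeval_of_isWeightedHomogeneous_nat {g : A2} {n : ℕ}
    (hg : g.IsWeightedHomogeneous weight n) (hD : detRel ∣ traceDer g) :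
    ∃ P : Polynomial ℂ, detRel ∣ g - Polynomial.aeval trace P := by
  have hode : (n : ℤ) • ((2 * 𝕣 - 𝕤) * toChart g) +
      2 * (𝕣 ^ 2 - 𝕤 * 𝕣 + 1) * Polynomial.derivative (toChart g) = 0 := by
    obtain ⟨h, hh⟩ := hD
    have := toChart_traceDer g
    rw [hh, map_mul, toChart_detRel, zero_mul, euler_eq hg, map_zsmul, mul_smul_comm] at this
    rw [← this]
  have hmk : Ideal.Quotient.mk (Ideal.span {detRel}) g =
      Ideal.Quotient.mk (Ideal.span {detRel}) (X 1 ^ n * ofChart (toChart g)) := by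
    rw [map_mul, mk_ofChart_toChart, ← map_mul, X_one_pow_mul_dehomogenize hg]
  suffices ∃ P : Polynomial ℂ, Ideal.Quotient.mk (Ideal.span {detRel}) g =
      Ideal.Quotient.mk (Ideal.span {detRel}) (Polynomial.aeval trace P) by
    obtain ⟨P, hP⟩ := this
    exact ⟨P, Ideal.mem_span_singleton.mp (Ideal.Quotient.eq.mp hP)⟩
  by_cases h0 : toChart g = 0
  · exact ⟨0, by rw [hmk, h0]; simp⟩
  · have hdeg := Polynomial.natDegree_eq_neg_of_derivative_eq h0 hode
    obtain ⟨rfl, hdeg0⟩ : n = 0 ∧ (toChart g).natDegree = 0 := by omega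
    refine ⟨(toChart g).coeff 0, ?_⟩
    rw [hmk, Polynomial.eq_C_of_natDegree_eq_zero hdeg0]
    simp [ofChart]

def swapBC : A2 →ₐ[ℂ] A2 := rename (Equiv.swap 1 2)

theorem swapBC_swapBC (g : A2) : swapBC (swapBC g) = g := by
  simp [swapBC, rename_rename, Function.comp_def, Equiv.swap_apply_self, ← Function.id_def]

theorem swapBC_detRel : swapBC detRel = detRel := by
  simp [swapBC, detRel, Equiv.swap_apply_def]
  ring

theorem swapBC_trace : swapBC trace = trace := by
  simp [swapBC, trace, Equiv.swap_apply_def]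

theorem isWeightedHomogeneous_swapBC {g : A2} {m : ℤ} (hg : g.IsWeightedHomogeneous weight m) :
    (swapBC g).IsWeightedHomogeneous weight (-m) := by
  induction hg using IsWeightedHomogeneous.induction_on with
  | zero => simpa using isWeightedHomogeneous_zero ℂ weight (-m)
  | add p q _ _ hp hq => rw [map_add]; exact hp.add hq
  | monomial d r hd =>
    rw [swapBC, rename_monomial]
    apply isWeightedHomogeneous_monomial
    rw [weight_apply] at hd ⊢
    simp [Finsupp.mapDomain_equiv_apply]
    omega

theorem traceDer_swapBC (g : A2) : traceDer (swapBC g) = swapBC (traceDer g) := by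
  induction g using MvPolynomial.induction_on with
  | C c => simp [swapBC]
  | add p q hp hq => simp only [map_add, hp, hq]
  | mul_X p i hp =>
    have hX : traceDer (swapBC (X i)) = swapBC (traceDer (X i)) := by
      fin_cases i <;>
        simp [swapBC, traceDer_X, traceDerCoeff, Equiv.swap_apply_def, map_ofNat] <;> ring
    simp only [map_mul, Derivation.leibniz, smul_eq_mul, map_add, hp, hX]

theorem exists_dvd_sub_aeval_of_isWeightedHomogeneous {g : A2} {m : ℤ}
    (hg : g.IsWeightedHomogeneous weight m) (hD : detRel ∣ traceDer g) :
    ∃ P : Polynomial ℂ, detRel ∣ g - Polynomial.aeval trace P := by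
  obtain ⟨n, rfl | rfl⟩ := Int.eq_nat_or_neg m
  · exact exists_dvd_sub_aeval_of_isWeightedHomogeneous_nat hg hD
  · have hD' : detRel ∣ traceDer (swapBC g) := by
      simpa [traceDer_swapBC, swapBC_detRel] using map_dvd swapBC hD
    obtain ⟨P, hP⟩ := exists_dvd_sub_aeval_of_isWeightedHomogeneous_nat
      (by simpa using isWeightedHomogeneous_swapBC hg) hD'
    refine ⟨P, ?_⟩
    simpa [swapBC_swapBC, swapBC_detRel, ← Polynomial.aeval_algHom_apply, swapBC_trace]
      using map_dvd swapBC hP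

theorem exists_dvd_sub_aeval_of_dvd_traceDer {g : A2} (hD : detRel ∣ traceDer g) :
    ∃ P : Polynomial ℂ, detRel ∣ g - Polynomial.aeval trace P := by
  have hcomp (m : ℤ) : ∃ P : Polynomial ℂ,
      detRel ∣ weightedHomogeneousComponent weight m g - Polynomial.aeval trace P := by
    obtain ⟨h, hh⟩ := hD
    refine exists_dvd_sub_aeval_of_isWeightedHomogeneous
      (weightedHomogeneousComponent_isWeightedHomogeneous m g)
      ⟨weightedHomogeneousComponent weight m h, ?_⟩
    rw [← weightedHomogeneousComponent_traceDer, hh, weightedHomogeneousComponent_detRel_mul]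
  choose P hP using hcomp
  have hfin := weightedHomogeneousComponent_finsupp (w := weight) g
  have hsum : ∑ m ∈ hfin.toFinset, weightedHomogeneousComponent weight m g = g := by
    rw [← finsum_eq_sum _ hfin]
    exact sum_weightedHomogeneousComponent weight g
  refine ⟨∑ m ∈ hfin.toFinset, P m, ?_⟩
  nth_rewrite 1 [← hsum]
  rw [map_sum, ← Finset.sum_sub_distrib]
  exact Finset.dvd_sum fun m _ => hP m

theorem detRel_dvd_traceDer_of_dvd_sub_aeval {g : A2} {P : Polynomial ℂ}
    (h : detRel ∣ g - Polynomial.aeval trace P) : detRel ∣ traceDer g := by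
  obtain ⟨k, hk⟩ := h
  rw [sub_eq_iff_eq_add.mp hk]
  simp [Derivation.leibniz, traceDer_detRel, traceDer_trace]

end SL2Trace

/-- in `O(SL_2) = ℂ[a,b,c,d]/(ad − bc − 1)` with the induced
Poisson bracket, the Poisson centralizer of the trace `a + d` is `ℂ[a+d]`:
stated at the level of representatives, `{a+d, g}` lies in the ideal
`(ad − bc − 1)` if and only if `g` agrees modulo that ideal with a polynomial
in `a + d`. -/
theorem stmt7 :
    ∀ g : A2,
      pb2 (X 0 + X 3) g ∈ Ideal.span ({X 0 * X 3 - X 1 * X 2 - 1} : Set A2) ↔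
      ∃ p : Polynomial ℂ,
        g - Polynomial.aeval (X 0 + X 3) p ∈
          Ideal.span ({X 0 * X 3 - X 1 * X 2 - 1} : Set A2) := by
  intro g
  rw [show pb2 (X 0 + X 3) g = SL2Trace.traceDer g from SL2Trace.pb2_trace g]
  simp_rw [Ideal.mem_span_singleton]
  exact ⟨SL2Trace.exists_dvd_sub_aeval_of_dvd_traceDer,
    fun ⟨_, hP⟩ => SL2Trace.detRel_dvd_traceDer_of_dvd_sub_aeval hP⟩
end
end
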